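/- Let s > 0 and ε ∈ [0,1). Then the function F(t) = (ε + arccos t)^{-s} has a power series expansion F(t) = Σ_{k≥0} a_k t^k valid for |t| < 1 in which every coefficient a_k is strictly positive. -/

import Mathlib

/-!
Write `A = ε + π/2`, so that `ε + arccos t = A (1 - arcsin t / A)` and
`F(t) = A^(-s) ∑ₖ choose(s + k - 1, k) A^(-k) (arcsin t)^k` by the binomial series, which converges
because `|arcsin t| < π/2 ≤ A`. The Taylor series of `arcsin` has nonnegative coefficients and
linear term `t`, so expanding each `(arcsin t)^k` and regrouping (legitimate, since at `|t|` every
term is nonnegative and the double series still converges) gives a power series whose `n`-th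
coefficient is at least its `k = n` contribution `A^(-s) choose(s + n - 1, n) A^(-n) > 0`.
-/

open Real PowerSeries Finset

theorem Real.norm_mul_pow_of_nonneg {c : ℝ} (hc : 0 ≤ c) (t : ℝ) (n : ℕ) :
    ‖c * t ^ n‖ = c * |t| ^ n := by
  rw [norm_mul, norm_pow, Real.norm_of_nonneg hc, Real.norm_eq_abs]

theorem Ring.choose_add_sub_one_pos {s : ℝ} (hs : 0 < s) (n : ℕ) :
    0 < Ring.choose (s + n - 1) n := by
  rw [Ring.choose_eq_smul, Polynomial.descPochhammer_smeval_eq_ascPochhammer,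
    Polynomial.ascPochhammer_smeval_eq_eval, smul_eq_mul, show s + n - 1 - n + 1 = s by ring]
  exact mul_pos (by positivity) (ascPochhammer_pos n s hs)

theorem Real.hasSum_choose_mul_pow (s : ℝ) {u : ℝ} (hu : |u| < 1) :
    HasSum (fun n : ℕ => Ring.choose (s + n - 1) n * u ^ n) ((1 - u) ^ (-s)) := by
  have h := (Real.one_div_one_sub_rpow_hasFPowerSeriesOnBall_zero s).hasSum
    (y := u) (by simpa [enorm_eq_nnnorm, ← NNReal.coe_lt_coe] using hu)
  rw [Real.rpow_neg (by linarith [le_abs_self u])]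
  simpa [FormalMultilinearSeries.ofScalars_apply_eq, mul_comm] using h

theorem Real.hasSum_choose_mul_inv_pow_mul_pow (s : ℝ) {A y : ℝ} (hy : |y| < A) :
    HasSum (fun n : ℕ => Ring.choose (s + n - 1) n * A⁻¹ ^ n * y ^ n) ((1 - y / A) ^ (-s)) := by
  have hA : 0 < A := (abs_nonneg y).trans_lt hy
  convert Real.hasSum_choose_mul_pow s (u := y / A)
    (by rwa [abs_div, abs_of_pos hA, div_lt_one hA]) using 2 with n
  rw [div_pow, div_eq_mul_inv, inv_pow]
  ring

namespace PowerSeries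

theorem coeff_pow_self_of_constantCoeff_eq_zero {R : Type*} [CommSemiring R] {φ : R⟦X⟧}
    (h : constantCoeff φ = 0) (n : ℕ) : coeff n (φ ^ n) = coeff 1 φ ^ n := by
  obtain ⟨ψ, rfl⟩ := X_dvd_iff.2 h
  rw [mul_pow, coeff_X_pow_mul', if_pos le_rfl, Nat.sub_self, coeff_zero_eq_constantCoeff,
    map_pow, ← zero_add 1, coeff_succ_X_mul, coeff_zero_eq_constantCoeff]

theorem hasSum_coeff_mul_mul_pow {R : Type*} [NormedCommRing R] [CompleteSpace R]
    {φ ψ : R⟦X⟧} {t : R} (hφ : Summable fun n => ‖coeff n φ * t ^ n‖)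
    (hψ : Summable fun n => ‖coeff n ψ * t ^ n‖) :
    HasSum (fun n => coeff n (φ * ψ) * t ^ n)
      ((∑' n, coeff n φ * t ^ n) * ∑' n, coeff n ψ * t ^ n) := by
  have hcauchy : (fun n => coeff n (φ * ψ) * t ^ n) = fun n =>
      ∑ kl ∈ antidiagonal n, (coeff kl.1 φ * t ^ kl.1) * (coeff kl.2 ψ * t ^ kl.2) := by
    ext n
    rw [coeff_mul, sum_mul]
    refine sum_congr rfl fun kl hkl => ?_
    rw [← mem_antidiagonal.1 hkl, pow_add]
    ring
  rw [tsum_mul_tsum_eq_tsum_sum_antidiagonal_of_summable_norm hφ hψ, hcauchy]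
  exact (summable_norm_sum_mul_antidiagonal_of_summable_norm hφ hψ).of_norm.hasSum

section NonnegCoeff

variable {φ : ℝ⟦X⟧}

theorem coeff_pow_nonneg (hφ : ∀ n, 0 ≤ coeff n φ) (k n : ℕ) : 0 ≤ coeff n (φ ^ k) := by
  rw [coeff_pow]
  exact sum_nonneg fun _ _ => prod_nonneg fun _ _ => hφ _

theorem hasSum_coeff_pow_mul_pow (hφ : ∀ n, 0 ≤ coeff n φ) {t : ℝ}
    (ht : Summable fun n => coeff n φ * |t| ^ n) (k : ℕ) :
    HasSum (fun n => coeff n (φ ^ k) * t ^ n) ((∑' n, coeff n φ * t ^ n) ^ k) := by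
  induction k generalizing t with
  | zero =>
    rw [pow_zero, pow_zero]
    convert hasSum_single (f := fun n => coeff n (1 : ℝ⟦X⟧) * t ^ n) 0
      (fun n hn => by simp [coeff_one, hn]) using 1
    simp
  | succ k ih =>
    have hk := (ih (t := |t|) (by simpa only [abs_abs] using ht)).summable
    rw [pow_succ, pow_succ, ← (ih ht).tsum_eq]
    refine hasSum_coeff_mul_mul_pow ?_ ?_
    · simpa only [Real.norm_mul_pow_of_nonneg (coeff_pow_nonneg hφ k _)] using hk
    · simpa only [Real.norm_mul_pow_of_nonneg (hφ _)] using ht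

theorem hasSum_tsum_mul_coeff_pow_mul_pow {b : ℕ → ℝ} (hb : ∀ k, 0 ≤ b k)
    (hφ : ∀ n, 0 ≤ coeff n φ) {t : ℝ} (ht : Summable fun n => coeff n φ * |t| ^ n)
    (hbt : Summable fun k => b k * (∑' n, coeff n φ * |t| ^ n) ^ k) :
    HasSum (fun n => (∑' k, b k * coeff n (φ ^ k)) * t ^ n)
      (∑' k, b k * (∑' n, coeff n φ * t ^ n) ^ k) := by
  set f : ℕ × ℕ → ℝ := fun p => b p.1 * coeff p.2 (φ ^ p.1) * t ^ p.2
  have hrow (x : ℝ) (hx : Summable fun n => coeff n φ * |x| ^ n) (k : ℕ) :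
      HasSum (fun n => b k * coeff n (φ ^ k) * x ^ n) (b k * (∑' n, coeff n φ * x ^ n) ^ k) := by
    simpa only [mul_assoc] using (hasSum_coeff_pow_mul_pow hφ hx k).mul_left (b k)
  have hcoeff (p : ℕ × ℕ) : 0 ≤ b p.1 * coeff p.2 (φ ^ p.1) :=
    mul_nonneg (hb _) (coeff_pow_nonneg hφ _ _)
  have hf : Summable f := by
    have ht' : Summable fun n => coeff n φ * |(|t|)| ^ n := by simpa only [abs_abs] using ht
    refine Summable.of_norm ?_
    simp only [f, Real.norm_mul_pow_of_nonneg (hcoeff _)]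
    refine (summable_prod_of_nonneg fun p => ?_).2 ⟨fun k => (hrow _ ht' k).summable, ?_⟩
    · have := hcoeff p
      positivity
    · simpa only [(hrow _ ht' _).tsum_eq, abs_abs] using hbt
  have hrows := hf.hasSum.prod_fiberwise (hrow t ht)
  have hcols := ((Equiv.prodComm ℕ ℕ).hasSum_iff.2 hf.hasSum).prod_fiberwise fun n =>
    (hf.prod_symm.prod_factor n).hasSum
  simp only [Prod.swap, f, tsum_mul_right] at hcols
  rwa [hrows.tsum_eq]

theorem summable_mul_coeff_pow {b : ℕ → ℝ} (hb : ∀ k, 0 ≤ b k) (hφ : ∀ n, 0 ≤ coeff n φ)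
    {r : ℝ} (hr : 0 < r) (hφr : Summable fun n => coeff n φ * r ^ n)
    (hbr : Summable fun k => b k * (∑' n, coeff n φ * r ^ n) ^ k) (n : ℕ) :
    Summable fun k => b k * coeff n (φ ^ k) := by
  have hle (k : ℕ) : coeff n (φ ^ k) * r ^ n ≤ (∑' m, coeff m φ * r ^ m) ^ k :=
    le_hasSum (hasSum_coeff_pow_mul_pow hφ (by simpa only [abs_of_pos hr] using hφr) k) n
      fun m _ => mul_nonneg (coeff_pow_nonneg hφ k m) (pow_nonneg hr.le m)
  refine (hbr.div_const (r ^ n)).of_nonneg_of_le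
    (fun k => mul_nonneg (hb k) (coeff_pow_nonneg hφ k n)) fun k => ?_
  rw [le_div_iff₀ (pow_pos hr n), mul_assoc]
  exact mul_le_mul_of_nonneg_left (hle k) (hb k)

end NonnegCoeff

end PowerSeries

theorem hasDerivAt_tsum_arcsin_series {x : ℝ} (hx : |x| < 1) :
    HasDerivAt
      (fun z => ∑' k : ℕ, Ring.choose ((1 : ℝ) / 2 + k - 1) k / (2 * k + 1) * z ^ (2 * k + 1))
      ((1 - x ^ 2) ^ (-(1 / 2 : ℝ))) x := by
  obtain ⟨r, hxr, hr1⟩ := exists_between hx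
  have hr0 : 0 < r := (abs_nonneg x).trans_lt hxr
  have hbound := Real.hasSum_choose_mul_pow (1 / 2) (u := r ^ 2)
    (by rwa [abs_sq, sq_lt_one_iff_abs_lt_one, abs_of_pos hr0])
  rw [← (Real.hasSum_choose_mul_pow (1 / 2) (u := x ^ 2)
    (by rwa [abs_sq, sq_lt_one_iff_abs_lt_one])).tsum_eq]
  refine hasDerivAt_tsum_of_isPreconnected (t := Metric.ball (0 : ℝ) r) (y₀ := 0)
    (g := fun (k : ℕ) z => Ring.choose ((1 : ℝ) / 2 + k - 1) k / (2 * k + 1) * z ^ (2 * k + 1))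
    (g' := fun (k : ℕ) z => Ring.choose ((1 : ℝ) / 2 + k - 1) k * (z ^ 2) ^ k) hbound.summable
    Metric.isOpen_ball (convex_ball (0 : ℝ) r).isPreconnected (fun k y _ => ?_)
    (fun k y hy => ?_) (Metric.mem_ball_self hr0) (summable_zero.congr fun k => by simp)
    (by simpa using hxr)
  · refine ((hasDerivAt_pow (2 * k + 1) y).const_mul
      (Ring.choose ((1 : ℝ) / 2 + k - 1) k / (2 * k + 1))).congr_deriv ?_
    rw [Nat.add_sub_cancel, pow_mul]
    push_cast
    field_simp
  · have hy : |y| < r := by simpa using hy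
    have hc := (Ring.choose_add_sub_one_pos (one_half_pos (α := ℝ)) k).le
    rw [norm_mul, Real.norm_of_nonneg hc, norm_pow, Real.norm_eq_abs, abs_pow]
    gcongr

theorem Real.hasSum_arcsin {t : ℝ} (ht : |t| < 1) :
    HasSum (fun k : ℕ => Ring.choose ((1 : ℝ) / 2 + k - 1) k / (2 * k + 1) * t ^ (2 * k + 1))
      (arcsin t) := by
  have hsum : Summable fun k : ℕ =>
      Ring.choose ((1 : ℝ) / 2 + k - 1) k / (2 * k + 1) * t ^ (2 * k + 1) := by
    refine Summable.of_norm_bounded (Real.hasSum_choose_mul_pow (1 / 2) (u := t ^ 2)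
      (by rwa [abs_sq, sq_lt_one_iff_abs_lt_one])).summable fun k => ?_
    have hc := (Ring.choose_add_sub_one_pos (one_half_pos (α := ℝ)) k).le
    rw [norm_mul, norm_div, Real.norm_of_nonneg hc, Real.norm_of_nonneg (by positivity), norm_pow,
      Real.norm_eq_abs, pow_succ, pow_mul, sq_abs]
    gcongr ?_ * ?_
    · exact div_le_self hc (by linarith [k.cast_nonneg (α := ℝ)])
    · exact mul_le_of_le_one_right (by positivity) ht.le
  suffices h : Set.EqOn (fun z => ∑' k : ℕ,
      Ring.choose ((1 : ℝ) / 2 + k - 1) k / (2 * k + 1) * z ^ (2 * k + 1)) arcsin (Metric.ball 0 1)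
  from h (by simpa using ht) ▸ hsum.hasSum
  have hderiv {x : ℝ} (hx : x ∈ Metric.ball (0 : ℝ) 1) := hasDerivAt_tsum_arcsin_series
    (by simpa using hx)
  refine Metric.isOpen_ball.eqOn_of_deriv_eq (convex_ball 0 1).isPreconnected
    (fun x hx => (hderiv hx).differentiableAt.differentiableWithinAt)
    (fun x hx => ?_) (fun x hx => ?_) (Metric.mem_ball_self one_pos) (by simp)
  · have hx : |x| < 1 := by simpa using hx
    exact (Real.differentiableAt_arcsin.2 ⟨by linarith [neg_abs_le x], by linarith [le_abs_self x]⟩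
      ).differentiableWithinAt
  · have hx1 : x ^ 2 < 1 := by simpa using hx
    rw [(hderiv hx).deriv, deriv_arcsin, Real.rpow_neg (by linarith)]
    simp only [Real.sqrt_eq_rpow, one_div]

/-- The Taylor series of `arcsin`, the termwise antiderivative of
`(1 - x²)^(-1/2) = ∑ₖ choose(1/2 + k - 1, k) x^(2k)`. -/
noncomputable def arcsinSeries : ℝ⟦X⟧ :=
  PowerSeries.mk fun n =>
    if Even n then 0 else Ring.choose ((1 : ℝ) / 2 + (n / 2 : ℕ) - 1) (n / 2) / n

theorem coeff_arcsinSeries_nonneg (n : ℕ) : 0 ≤ coeff n arcsinSeries := by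
  rw [arcsinSeries, coeff_mk]
  split_ifs
  · exact le_rfl
  · exact div_nonneg (Ring.choose_add_sub_one_pos one_half_pos _).le n.cast_nonneg

theorem constantCoeff_arcsinSeries : constantCoeff arcsinSeries = 0 := by
  simp [← coeff_zero_eq_constantCoeff_apply, arcsinSeries]

theorem coeff_one_arcsinSeries : coeff 1 arcsinSeries = 1 := by
  simp [arcsinSeries]

theorem hasSum_coeff_arcsinSeries_mul_pow {t : ℝ} (ht : |t| < 1) :
    HasSum (fun n => coeff n arcsinSeries * t ^ n) (arcsin t) := by
  have hodd : Function.Injective fun k : ℕ => 2 * k + 1 := fun a b h => by simpa using h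
  refine (hodd.hasSum_iff fun n hn => ?_).1 ?_
  · have : Even n := by
      by_contra h
      obtain ⟨k, rfl⟩ := Nat.not_even_iff_odd.1 h
      exact hn ⟨k, rfl⟩
    simp [arcsinSeries, this]
  · convert Real.hasSum_arcsin ht using 2 with k
    have : (2 * k + 1) / 2 = k := by omega
    simp [arcsinSeries, this]

theorem Real.abs_arcsin_lt_pi_div_two {t : ℝ} (ht : |t| < 1) : |arcsin t| < π / 2 := by
  rw [abs_lt] at ht ⊢
  exact ⟨neg_pi_div_two_lt_arcsin.2 ht.1, arcsin_lt_pi_div_two.2 ht.2⟩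

noncomputable def arcsinBinomialCoeff (s A : ℝ) (n : ℕ) : ℝ :=
  ∑' k : ℕ, Ring.choose (s + k - 1) k * A⁻¹ ^ k * coeff n (arcsinSeries ^ k)

theorem choose_mul_inv_pow_pos {s A : ℝ} (hs : 0 < s) (hA : 0 < A) (k : ℕ) :
    0 < Ring.choose (s + k - 1) k * A⁻¹ ^ k :=
  mul_pos (Ring.choose_add_sub_one_pos hs k) (pow_pos (inv_pos.2 hA) k)

theorem summable_choose_mul_inv_pow_mul_tsum_arcsinSeries_pow (s : ℝ) {A : ℝ} (hA : π / 2 ≤ A)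
    {r : ℝ} (hr : |r| < 1) :
    Summable fun k : ℕ =>
      Ring.choose (s + k - 1) k * A⁻¹ ^ k * (∑' n, coeff n arcsinSeries * r ^ n) ^ k := by
  rw [(hasSum_coeff_arcsinSeries_mul_pow hr).tsum_eq]
  exact (Real.hasSum_choose_mul_inv_pow_mul_pow s
    ((abs_arcsin_lt_pi_div_two hr).trans_le hA)).summable

theorem arcsinBinomialCoeff_pos {s A : ℝ} (hs : 0 < s) (hA : π / 2 ≤ A) (n : ℕ) :
    0 < arcsinBinomialCoeff s A n := by
  have hb (k : ℕ) := (choose_mul_inv_pow_pos hs (pi_div_two_pos.trans_le hA) k).le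
  refine Summable.tsum_pos ?_ (fun (k : ℕ) => mul_nonneg (hb k)
    (coeff_pow_nonneg coeff_arcsinSeries_nonneg k n)) n ?_
  · exact summable_mul_coeff_pow hb coeff_arcsinSeries_nonneg one_half_pos
      (hasSum_coeff_arcsinSeries_mul_pow (by norm_num)).summable
      (summable_choose_mul_inv_pow_mul_tsum_arcsinSeries_pow s hA (by norm_num)) n
  · rw [coeff_pow_self_of_constantCoeff_eq_zero constantCoeff_arcsinSeries,
      coeff_one_arcsinSeries, one_pow, mul_one]
    exact choose_mul_inv_pow_pos hs (pi_div_two_pos.trans_le hA) n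

theorem hasSum_arcsinBinomialCoeff_mul_pow {s A : ℝ} (hs : 0 < s) (hA : π / 2 ≤ A) {t : ℝ}
    (ht : |t| < 1) :
    HasSum (fun n => arcsinBinomialCoeff s A n * t ^ n) ((1 - arcsin t / A) ^ (-s)) := by
  have habs : |(|t|)| < 1 := by rwa [abs_abs]
  have hb (k : ℕ) := (choose_mul_inv_pow_pos hs (pi_div_two_pos.trans_le hA) k).le
  have h := hasSum_tsum_mul_coeff_pow_mul_pow hb coeff_arcsinSeries_nonneg (hasSum_coeff_arcsinSeries_mul_pow habs).summable
    (summable_choose_mul_inv_pow_mul_tsum_arcsinSeries_pow s hA habs)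
  rw [(hasSum_coeff_arcsinSeries_mul_pow ht).tsum_eq,
    (Real.hasSum_choose_mul_inv_pow_mul_pow s ((abs_arcsin_lt_pi_div_two ht).trans_le hA)).tsum_eq]
    at h
  exact h

/-- For `s > 0` and `ε ∈ [0,1)`, the function `F(t) = (ε + arccos t)^{-s}`
has a power series expansion on `(-1,1)` with all coefficients strictly positive. -/
theorem geodesic_neg_power_pos_coeffs (s ε : ℝ) (hs : 0 < s)
    (hε : ε ∈ Set.Ico (0 : ℝ) 1) :
    ∃ a : ℕ → ℝ, (∀ k : ℕ, 0 < a k) ∧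
      ∀ t : ℝ, |t| < 1 →
        HasSum (fun k : ℕ => a k * t ^ k) ((ε + Real.arccos t) ^ (-s)) := by
  set A := ε + π / 2 with hA_def
  have hA : π / 2 ≤ A := by linarith [hε.1]
  have hA0 : 0 < A := by linarith [pi_pos]
  refine ⟨fun n => A ^ (-s) * arcsinBinomialCoeff s A n,
    fun n => mul_pos (rpow_pos_of_pos hA0 _) (arcsinBinomialCoeff_pos hs hA n), fun t ht => ?_⟩
  have hsplit : ε + arccos t = A * (1 - arcsin t / A) := by
    rw [arccos_eq_pi_div_two_sub_arcsin, mul_sub, mul_one, mul_div_cancel₀ _ hA0.ne', hA_def]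
    ring
  have hu : arcsin t / A < 1 :=
    (div_lt_one hA0).2 ((le_abs_self _).trans_lt ((abs_arcsin_lt_pi_div_two ht).trans_le hA))
  rw [hsplit, mul_rpow hA0.le (sub_nonneg.2 hu.le)]
  simpa only [mul_assoc] using (hasSum_arcsinBinomialCoeff_mul_pow hs hA ht).mul_left (A ^ (-s))
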